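/- arXiv:2112.13321 — 6 statements merged into one kernel-verified Lean document; each statement's English description precedes it below -/
import Mathlib

section
/- Let p be a multiaffine polynomial in x_1,...,x_n with dual p*(x) = x_1···x_n · p(1/x_1,...,1/x_n), and let Φ denote the minor lift map sending Σ_J a_J Π_{i∈J} x_i to Σ_J a_J det(X_J). Then for every invertible symmetric n×n matrix X, Φ(p*)(X) = det(X) · Φ(p)(X⁻¹). -/
open Matrix

/-- Jacobi-type identity via block elimination: for an invertible block matrix `Y`,
`det Y₂₂ = det Y * det ((Y⁻¹)₁₁)`. -/
lemma jacobi_blocks {m l : Type*} [Fintype m] [Fintype l] [DecidableEq m] [DecidableEq l]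
    (Y : Matrix (m ⊕ l) (m ⊕ l) ℝ) (h : IsUnit Y.det) :
    Y.toBlocks₂₂.det = Y.det * (Y⁻¹.toBlocks₁₁).det := by
  obtain ⟨A, B, C, D, hY⟩ : ∃ A B C D, Y = fromBlocks A B C D :=
    ⟨_, _, _, _, (fromBlocks_toBlocks Y).symm⟩
  obtain ⟨P, Q, R, S, hZ⟩ : ∃ P Q R S, Y⁻¹ = fromBlocks P Q R S :=
    ⟨_, _, _, _, (fromBlocks_toBlocks Y⁻¹).symm⟩
  have hmul : Y * Y⁻¹ = 1 := mul_nonsing_inv Y h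
  rw [hZ] at hmul
  rw [hY, fromBlocks_multiply, ← fromBlocks_one] at hmul
  have h1 : A * P + B * R = 1 := by
    have := congrArg Matrix.toBlocks₁₁ hmul
    simpa only [toBlocks_fromBlocks₁₁] using this
  have h0 : C * P + D * R = 0 := by
    have := congrArg Matrix.toBlocks₂₁ hmul
    simpa only [toBlocks_fromBlocks₂₁] using this
  have key : (fromBlocks A B C D) * (fromBlocks P 0 R 1) = fromBlocks 1 B 0 D := by
    rw [fromBlocks_multiply]
    simp [h1, h0]
  have hd := congrArg Matrix.det key
  rw [det_mul, det_fromBlocks_zero₁₂, det_fromBlocks_zero₂₁] at hd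
  simp only [det_one, one_mul, mul_one] at hd
  rw [hZ, hY]
  simp only [toBlocks_fromBlocks₂₂, toBlocks_fromBlocks₁₁]
  exact hd.symm

/-- The principal minor of a square matrix indexed by the subset `S`. -/
noncomputable def principalMinor {n : ℕ} (A : Matrix (Fin n) (Fin n) ℝ)
    (S : Finset (Fin n)) : ℝ :=
  (A.submatrix (fun i : S => (i : Fin n)) (fun i : S => (i : Fin n))).det

lemma jacobi_minor {n : ℕ} (X : Matrix (Fin n) (Fin n) ℝ) (hdet : IsUnit X.det)
    (J : Finset (Fin n)) :
    principalMinor X Jᶜ = X.det * principalMinor X⁻¹ J := by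
  classical
  let e : {i // i ∈ J} ⊕ {i // ¬ i ∈ J} ≃ Fin n := Equiv.sumCompl (· ∈ J)
  let Y := X.submatrix e e
  have hYdet : Y.det = X.det := det_submatrix_equiv_self e X
  have hYinv : Y⁻¹ = X⁻¹.submatrix e e := inv_submatrix_equiv X e e
  have hunit : IsUnit Y.det := hYdet ▸ hdet
  have hjac := jacobi_blocks Y hunit
  -- identify blocks with principal minors
  have h22 : Y.toBlocks₂₂.det = principalMinor X Jᶜ := by
    have hre : (X.submatrix (fun i : (Jᶜ : Finset (Fin n)) => (i : Fin n))
        (fun i : (Jᶜ : Finset (Fin n)) => (i : Fin n)))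
        = Y.toBlocks₂₂.submatrix
          (fun i : (Jᶜ : Finset (Fin n)) => (⟨(i : Fin n), Finset.mem_compl.mp i.2⟩ : {i // ¬ i ∈ J}))
          (fun i : (Jᶜ : Finset (Fin n)) => (⟨(i : Fin n), Finset.mem_compl.mp i.2⟩ : {i // ¬ i ∈ J})) := by
      ext i j
      simp [Y, Matrix.toBlocks₂₂, e]
    rw [principalMinor, hre]
    exact (Matrix.det_submatrix_equiv_self
      ((Equiv.subtypeEquivRight (fun x => Finset.mem_compl) : {i // i ∈ Jᶜ} ≃ {i // ¬ i ∈ J}))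
      Y.toBlocks₂₂).symm
  have h11 : (Y⁻¹.toBlocks₁₁).det = principalMinor X⁻¹ J := by
    have hre : Y⁻¹.toBlocks₁₁ = (X⁻¹).submatrix (fun i : J => (i : Fin n))
        (fun i : J => (i : Fin n)) := by
      ext i j
      simp [hYinv, Matrix.toBlocks₁₁, e]
    rw [hre, principalMinor]
  rw [← h22, ← h11, hjac, hYdet]

/-- For a multiaffine polynomial `p = Σ_J a_J Π_{i∈J} x_i`, its dual
`p* = Σ_J a_J Π_{i∉J} x_i` has minor lift `Φ(p*)(X) = Σ_J a_J det(X_{Jᶜ})`,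
and for every invertible symmetric `X` we have `Φ(p*)(X) = det(X) · Φ(p)(X⁻¹)`. -/
theorem minor_lift_dual {n : ℕ} (a : Finset (Fin n) → ℝ)
    (X : Matrix (Fin n) (Fin n) ℝ) (hX : X.IsSymm) (hdet : IsUnit X.det) :
    ∑ J : Finset (Fin n), a J * principalMinor X Jᶜ
      = X.det * ∑ J : Finset (Fin n), a J * principalMinor X⁻¹ J := by
  rw [Finset.mul_sum]
  refine Finset.sum_congr rfl fun J _ => ?_
  rw [jacobi_minor X hdet J]
  ring
end

section
/- Let Π be a partition of [n] into blocks, and write i ∼ j if i and j lie in the same block. Let B ⊆ [n] and let σ be a permutation of B. Then the number of elements b ∈ B with b ≁ σ(b) is never equal to 1. -/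
/-- Let `∼` be an equivalence relation on `[n]` (equivalently, a partition of
`[n]` into blocks), `B ⊆ [n]` and `σ` a permutation of `B` (it maps `B` to `B`
and fixes everything outside `B`). Then the number of `b ∈ B` with
`b ≁ σ(b)` is never equal to `1`. -/
theorem offblock_count_ne_one {n : ℕ} (r : Fin n → Fin n → Prop)
    (hr : Equivalence r) [DecidableRel r] (B : Finset (Fin n))
    (σ : Equiv.Perm (Fin n)) (hmem : ∀ b ∈ B, σ b ∈ B)
    (hfix : ∀ b ∉ B, σ b = b) :
    (B.filter fun b => ¬ r b (σ b)).card ≠ 1 := by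
  intro h1
  obtain ⟨a, ha⟩ := Finset.card_eq_one.mp h1
  have haB : a ∈ B ∧ ¬ r a (σ a) :=
    Finset.mem_filter.mp (ha ▸ Finset.mem_singleton_self a)
  have hother : ∀ b, b ≠ a → r b (σ b) := by
    intro b hb
    by_cases hB : b ∈ B
    · by_contra hrb
      have hmem' : b ∈ B.filter fun b => ¬ r b (σ b) :=
        Finset.mem_filter.mpr ⟨hB, hrb⟩
      rw [ha] at hmem'
      exact hb (Finset.mem_singleton.mp hmem')
    · rw [hfix b hB]; exact hr.refl b
  have key : ∀ k : ℕ, r (σ a) ((σ ^ (k + 1)) a) ∨ r (σ a) a := by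
    intro k
    induction k with
    | zero => left; simpa using hr.refl (σ a)
    | succ k ih =>
      rcases ih with h | h
      · by_cases hk : (σ ^ (k + 1)) a = a
        · right; rwa [hk] at h
        · left
          have hstep := hother _ hk
          have h2 : (σ ^ (k + 2)) a = σ ((σ ^ (k + 1)) a) := by
            rw [pow_succ']
            rfl
          rw [h2]
          exact hr.trans h hstep
      · right; exact h
  have hm : 0 < orderOf σ := orderOf_pos σ
  obtain ⟨k, hk⟩ : ∃ k, orderOf σ = k + 1 :=
    ⟨orderOf σ - 1, (Nat.succ_pred_eq_of_pos hm).symm⟩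
  have hpow : (σ ^ (k + 1)) a = a := by
    rw [← hk, pow_orderOf_eq_one]; rfl
  have hfin : r (σ a) a := by
    rcases key k with h | h
    · rwa [hpow] at h
    · exact h
  exact haB.2 (hr.symm hfin)
end

section
/- Let Π be a partition of [n] with associated equivalence i ∼ j, let B ⊆ [n], and let A be a symmetric n×n matrix with A_{ij} = 0 whenever i ≁ j (A is block diagonal with respect to Π). Then for any pair i ≁ j, the partial derivative of det(X_B) with respect to the off-block entry X_{ij}, evaluated at A, equals 0. -/
open MvPolynomial

/-- The generic symmetric matrix of indeterminates: entry `(i,j)` is the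
variable indexed by the unordered pair `{i,j}`, so `X_{ij} = X_{ji}`. -/
noncomputable def genericSymMatrix (n : ℕ) :
    Matrix (Fin n) (Fin n) (MvPolynomial (Sym2 (Fin n)) ℝ) :=
  Matrix.of fun i j => X (Sym2.mk i j)

/-- The principal minor (as a polynomial) indexed by a subset `B`. -/
noncomputable def genericPrincipalMinor (n : ℕ) (B : Finset (Fin n)) :
    MvPolynomial (Sym2 (Fin n)) ℝ :=
  ((genericSymMatrix n).submatrix (fun i : B => (i : Fin n))
    (fun i : B => (i : Fin n))).det

/- Expanding `det(X_B)` by Leibniz, each term is `±∏_b X_{σ b, b}`, whose derivative in `X_{ij}`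
is a sum of products that each omit one factor equal to `X_{ij}`. Such a factor has `σ b ≁ b`, and a
permutation never moves exactly one point out of its block, so a second off-block factor
`X_{σ c, c}` survives in the product and vanishes at the block-diagonal `A`. -/

theorem Derivation.leibniz_finset_prod {R A M ι : Type*} [CommSemiring R] [CommSemiring A]
    [AddCommMonoid M] [Algebra R A] [Module A M] [Module R M] [DecidableEq ι]
    (D : Derivation R A M) (s : Finset ι) (f : ι → A) :
    D (∏ b ∈ s, f b) = ∑ b ∈ s, (∏ c ∈ s.erase b, f c) • D (f b) := by
  induction s using Finset.induction_on with
  | empty => simp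
  | insert a s ha ih =>
    rw [Finset.prod_insert ha, D.leibniz, ih, Finset.sum_insert ha, Finset.erase_insert ha,
      Finset.smul_sum, add_comm]
    congr 1
    refine Finset.sum_congr rfl fun b hb => ?_
    rw [Finset.erase_insert_of_ne (ne_of_mem_of_not_mem hb ha).symm,
      Finset.prod_insert fun h => ha (Finset.mem_of_mem_erase h), smul_smul]

theorem Equiv.Perm.exists_ne_not_rel_of_not_rel {α : Type*} [Finite α] {r : α → α → Prop}
    (hr : Equivalence r) (σ : Equiv.Perm α) {b : α} (hb : ¬ r (σ b) b) :
    ∃ c ≠ b, ¬ r (σ c) c := by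
  classical
  have := Fintype.ofFinite α
  by_contra! hσ
  set D : Finset α := {x | r x b}
  have hmem (x : α) : x ∈ D ↔ r x b := Finset.mem_filter_univ x
  -- `σ⁻¹` maps the block `D` of `b` into itself, hence onto itself; so `b = σ⁻¹ y` with `y ∈ D`.
  have hmaps : D.map σ.symm.toEmbedding ⊆ D := by
    intro y hy
    obtain ⟨x, hxD, rfl⟩ := Finset.mem_map.mp hy
    have hxb : r x b := (hmem x).mp hxD
    have hne : σ.symm x ≠ b := fun h => hb (σ.symm_apply_eq.mp h ▸ hxb)
    have hx : r x (σ.symm x) := by simpa using hσ _ hne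
    exact (hmem _).mpr (hr.trans (hr.symm hx) hxb)
  have hbD : b ∈ D.map σ.symm.toEmbedding := by
    rw [Finset.map_eq_of_subset hmaps, hmem]
    exact hr.refl b
  obtain ⟨y, hyD, hy⟩ := Finset.mem_map.mp hbD
  exact hb (σ.symm_apply_eq.mp hy ▸ (hmem y).mp hyD)

theorem MvPolynomial.eval_pderiv_prod_X_eq_zero {R σ ι : Type*} [CommSemiring R]
    [DecidableEq ι] (x : σ → R) (v : σ) (s : Finset ι) (f : ι → σ)
    (h : ∀ b ∈ s, f b = v → ∃ c ∈ s, c ≠ b ∧ x (f c) = 0) :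
    eval x (pderiv v (∏ b ∈ s, X (f b) : MvPolynomial σ R)) = 0 := by
  rw [Derivation.leibniz_finset_prod, map_sum]
  refine Finset.sum_eq_zero fun b hb => ?_
  by_cases hbv : f b = v
  · obtain ⟨c, hc, hcb, hxc⟩ := h b hb hbv
    rw [smul_eq_mul, map_mul, map_prod]
    exact mul_eq_zero_of_left
      (Finset.prod_eq_zero (Finset.mem_erase.mpr ⟨hcb, hc⟩) (by rw [eval_X, hxc])) _
  · rw [pderiv_X_of_ne hbv, smul_zero, map_zero]

/-- Let `∼` be an equivalence relation on `[n]` (a partition into blocks) and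
`A` a symmetric matrix (given as a function on unordered pairs) which is block
diagonal: `A_{ij} = 0` for `i ≁ j`. Then for every `i ≁ j`, the partial
derivative of the principal minor `det(X_B)` with respect to the off-block
entry `X_{ij}`, evaluated at `A`, is zero. -/
theorem pderiv_offblock_det_eq_zero {n : ℕ} (r : Fin n → Fin n → Prop)
    (hr : Equivalence r) (A : Sym2 (Fin n) → ℝ)
    (hA : ∀ i j, ¬ r i j → A (Sym2.mk i j) = 0)
    (B : Finset (Fin n)) (i j : Fin n) (hij : ¬ r i j) :
    eval A (pderiv (Sym2.mk i j) (genericPrincipalMinor n B)) = 0 := by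
  rw [genericPrincipalMinor, Matrix.det_apply, map_sum, map_sum]
  refine Finset.sum_eq_zero fun σ _ => ?_
  rw [Units.smul_def, map_zsmul, map_zsmul]
  refine smul_eq_zero_of_right _ <|
    eval_pderiv_prod_X_eq_zero A _ Finset.univ (fun b : B => s(((σ b : B) : Fin n), b)) ?_
  intro b _ hb
  have hσb : ¬ r (σ b) b := by
    rcases Sym2.eq_iff.mp hb with ⟨h₁, h₂⟩ | ⟨h₁, h₂⟩
    · rwa [h₁, h₂]
    · rw [h₁, h₂]
      exact fun h => hij (hr.symm h)
  obtain ⟨c, hcb, hc⟩ := σ.exists_ne_not_rel_of_not_rel (hr.comap Subtype.val) hσb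
  exact ⟨c, Finset.mem_univ _, hcb, hA _ _ hc⟩
end

section
/- (Koteljanskii's inequality) Let A be an n×n positive semidefinite real symmetric matrix and S, T ⊆ [n]. Then det(A_S)·det(A_T) ≥ det(A_{S∪T})·det(A_{S∩T}), where A_J denotes the principal submatrix indexed by J and the determinant of the empty matrix is 1. -/
/-!
For positive definite `A`, Schur complementation with respect to `A_J` gives
`det A_{J ∪ X} = det A_J · det C_X` for `X` disjoint from `J`, where `C` is the (symmetric) Schur
complement. With `X = {i}, {j}, {i, j}` this yields
`det A_{J+i+j} · det A_J = det A_J² (c_ii c_jj - c_ij²) ≤ det A_{J+i} · det A_{J+j}`,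
so `log det A_J` is submodular on pairs of added elements. Local submodularity of a set function
implies submodularity by adding the elements of `T \ S` one at a time. The positive semidefinite
case follows by continuity from `A + ε • 1`, `ε → 0⁺`.
-/

open Matrix Finset Filter Topology

section LocallySubmodular

variable {α β : Type*} [DecidableEq α] [AddCommMonoid β] [PartialOrder β]
  [IsOrderedCancelAddMonoid β]

def IsLocallySubmodular (f : Finset α → β) : Prop :=
  ∀ ⦃J : Finset α⦄ ⦃i j : α⦄, i ≠ j → i ∉ J → j ∉ J →
    f (insert i (insert j J)) + f J ≤ f (insert i J) + f (insert j J)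

namespace IsLocallySubmodular

variable {f : Finset α → β}

theorem add_insert_le_of_subset (hf : IsLocallySubmodular f) {J K : Finset α} (hJK : J ⊆ K)
    {i : α} (hi : i ∉ K) :
    f (insert i K) + f J ≤ f (insert i J) + f K := by
  suffices key : ∀ D : Finset α, Disjoint J D → i ∉ J ∪ D →
      f (insert i (J ∪ D)) + f J ≤ f (insert i J) + f (J ∪ D) by
    simpa [union_sdiff_of_subset hJK] using
      key (K \ J) disjoint_sdiff (by rwa [union_sdiff_of_subset hJK])
  intro D
  induction D using Finset.induction_on with
  | empty => simp
  | insert j D hjD ih =>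
    intro hJD hiJD
    rw [union_insert] at hiJD ⊢
    have hjJ : j ∉ J := disjoint_right.1 hJD (mem_insert_self j D)
    have hij : i ≠ j := fun h => hiJD (h ▸ mem_insert_self _ _)
    have hiJD' : i ∉ J ∪ D := fun h => hiJD (mem_insert_of_mem h)
    have hjJD : j ∉ J ∪ D := by simp [hjJ, hjD]
    have step := add_le_add (hf hij hiJD' hjJD) (ih (disjoint_insert_right.1 hJD).2 hiJD')
    refine le_of_add_le_add_right (a := f (insert i (J ∪ D)) + f (J ∪ D)) ?_
    convert step using 1 <;> abel

theorem union_add_inter_le (hf : IsLocallySubmodular f) (S T : Finset α) :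
    f (S ∪ T) + f (S ∩ T) ≤ f S + f T := by
  suffices key : ∀ D : Finset α, Disjoint S D → ∀ B ⊆ S,
      f (S ∪ D) + f B ≤ f S + f (B ∪ D) by
    have h := key (T \ S) disjoint_sdiff (S ∩ T) inter_subset_left
    rwa [union_sdiff_self_eq_union, union_comm (S ∩ T), inter_comm S T, sdiff_union_inter,
      inter_comm T S] at h
  intro D
  induction D using Finset.induction_on with
  | empty => simp
  | insert j D hjD ih =>
    intro hSD B hBS
    rw [union_insert, union_insert]
    have hjSD : j ∉ S ∪ D := by
      simp [disjoint_right.1 hSD (mem_insert_self j D), hjD]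
    have step := add_le_add
      (hf.add_insert_le_of_subset (union_subset_union hBS subset_rfl) hjSD)
      (ih (disjoint_insert_right.1 hSD).2 B hBS)
    refine le_of_add_le_add_right (a := f (B ∪ D) + f (S ∪ D)) ?_
    convert step using 1 <;> abel

end IsLocallySubmodular

end LocallySubmodular

section PrincipalMinor

variable {n : ℕ}

/-- Indexed by all of `Fin n`, so that its principal minors on sets disjoint from `J` can be
compared with those of `A`. -/
noncomputable def schurComplement (A : Matrix (Fin n) (Fin n) ℝ) (J : Finset (Fin n)) :
    Matrix (Fin n) (Fin n) ℝ :=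
  A - (A.submatrix id (↑) : Matrix (Fin n) J ℝ) * (A.submatrix (↑) (↑) : Matrix J J ℝ)⁻¹ *
    (A.submatrix (↑) id : Matrix J (Fin n) ℝ)

theorem principalMinor_union {A : Matrix (Fin n) (Fin n) ℝ} {J X : Finset (Fin n)}
    (hJ : principalMinor A J ≠ 0) (hJX : Disjoint J X) :
    principalMinor A (J ∪ X) = principalMinor A J * principalMinor (schurComplement A J) X := by
  let := invertibleOfIsUnitDet _ (isUnit_iff_ne_zero.2 hJ)
  have hblocks : (A.submatrix ((↑) : (J ∪ X : Finset (Fin n)) → Fin n) (↑)).submatrix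
      (Equiv.Finset.union J X hJX) (Equiv.Finset.union J X hJX) =
      fromBlocks (A.submatrix (↑) (↑)) (A.submatrix (↑) (↑)) (A.submatrix (↑) (↑))
        (A.submatrix (↑) (↑)) := by
    ext (a | a) (b | b) <;> rfl
  rw [principalMinor, ← det_submatrix_equiv_self (Equiv.Finset.union J X hJX), hblocks,
    det_fromBlocks₁₁, invOf_eq_nonsing_inv]
  congr 2

theorem Matrix.IsSymm.schurComplement {A : Matrix (Fin n) (Fin n) ℝ} (hA : A.IsSymm)
    (J : Finset (Fin n)) : (schurComplement A J).IsSymm := by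
  have hsub : ∀ {k l : Type} (f : k → Fin n) (g : l → Fin n),
      (A.submatrix f g)ᵀ = A.submatrix g f :=
    fun f g => by rw [transpose_submatrix, hA.eq]
  rw [IsSymm, _root_.schurComplement, transpose_sub, transpose_mul, transpose_mul,
    transpose_nonsing_inv, hsub, hsub, hsub, hA.eq, Matrix.mul_assoc]

theorem principalMinor_singleton (M : Matrix (Fin n) (Fin n) ℝ) (i : Fin n) :
    principalMinor M {i} = M i i := by
  simp [principalMinor]

theorem principalMinor_pair (M : Matrix (Fin n) (Fin n) ℝ) {i j : Fin n} (hij : i ≠ j) :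
    principalMinor M {i, j} = M i i * M j j - M i j * M j i := by
  let e : Fin 2 ≃ ({i, j} : Finset (Fin n)) :=
    Equiv.ofBijective ![⟨i, by simp⟩, ⟨j, by simp⟩] <|
      (Fintype.bijective_iff_injective_and_card _).2
        ⟨fun a b => by fin_cases a <;> fin_cases b <;> simp [hij, hij.symm],
          by rw [Fintype.card_fin, Fintype.card_coe, card_pair hij]⟩
  rw [principalMinor, ← det_submatrix_equiv_self e, det_fin_two]
  rfl

theorem principalMinor_insert_insert_mul_le {A : Matrix (Fin n) (Fin n) ℝ} (hA : A.IsSymm)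
    {J : Finset (Fin n)} (hJ : principalMinor A J ≠ 0) {i j : Fin n} (hij : i ≠ j)
    (hi : i ∉ J) (hj : j ∉ J) :
    principalMinor A (insert i (insert j J)) * principalMinor A J ≤
      principalMinor A (insert i J) * principalMinor A (insert j J) := by
  set C := schurComplement A J
  have hinsert : ∀ {k : Fin n}, k ∉ J →
      principalMinor A (insert k J) = principalMinor A J * C k k := fun hk => by
      rw [← principalMinor_singleton C, ← principalMinor_union hJ (disjoint_singleton_right.2 hk),
        union_singleton]
  have hCsymm : C j i = C i j := (hA.schurComplement J).apply i j
  have hpair : principalMinor A (insert i (insert j J)) =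
      principalMinor A J * (C i i * C j j - C i j ^ 2) := by
    rw [show insert i (insert j J) = J ∪ {i, j} by ext; simp,
      principalMinor_union hJ (by simp [hi, hj]), principalMinor_pair C hij, hCsymm, sq]
  rw [hpair, hinsert hi, hinsert hj]
  nlinarith [sq_nonneg (principalMinor A J * C i j)]

theorem principalMinor_pos {A : Matrix (Fin n) (Fin n) ℝ} (hA : A.PosDef) (J : Finset (Fin n)) :
    0 < principalMinor A J :=
  (hA.submatrix Subtype.val_injective).det_pos

theorem koteljanskii_of_posDef {A : Matrix (Fin n) (Fin n) ℝ} (hA : A.PosDef)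
    (S T : Finset (Fin n)) :
    principalMinor A (S ∪ T) * principalMinor A (S ∩ T) ≤
      principalMinor A S * principalMinor A T := by
  have hpos := principalMinor_pos hA
  have hlog_mul : ∀ J K, Real.log (principalMinor A J * principalMinor A K) =
      Real.log (principalMinor A J) + Real.log (principalMinor A K) :=
    fun J K => Real.log_mul (hpos J).ne' (hpos K).ne'
  have hlog : IsLocallySubmodular fun J => Real.log (principalMinor A J) :=
    fun J i j hij hi hj => by
      rw [← hlog_mul, ← hlog_mul]
      exact Real.log_le_log (mul_pos (hpos _) (hpos _)) <| principalMinor_insert_insert_mul_le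
        (isHermitian_iff_isSymm.1 hA.isHermitian) (hpos J).ne' hij hi hj
  have hsubmod := hlog.union_add_inter_le S T
  rwa [← hlog_mul, ← hlog_mul,
    Real.log_le_log_iff (mul_pos (hpos _) (hpos _)) (mul_pos (hpos _) (hpos _))] at hsubmod

theorem continuous_principalMinor (J : Finset (Fin n)) :
    Continuous fun A : Matrix (Fin n) (Fin n) ℝ => principalMinor A J :=
  (continuous_id.matrix_submatrix _ _).matrix_det

end PrincipalMinor

/-- Koteljanskii's inequality: for a positive semidefinite real symmetric
matrix `A` and subsets `S, T ⊆ [n]`,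
`det(A_S)·det(A_T) ≥ det(A_{S∪T})·det(A_{S∩T})`. -/
theorem koteljanskii_inequality {n : ℕ} (A : Matrix (Fin n) (Fin n) ℝ)
    (hA : A.PosSemidef) (S T : Finset (Fin n)) :
    principalMinor A (S ∪ T) * principalMinor A (S ∩ T)
      ≤ principalMinor A S * principalMinor A T := by
  have hclosed : IsClosed {M : Matrix (Fin n) (Fin n) ℝ |
      principalMinor M (S ∪ T) * principalMinor M (S ∩ T) ≤
        principalMinor M S * principalMinor M T} :=
    isClosed_le ((continuous_principalMinor _).mul (continuous_principalMinor _))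
      ((continuous_principalMinor _).mul (continuous_principalMinor _))
  have hlim : Tendsto (fun ε : ℝ => A + ε • 1) (𝓝[>] 0) (𝓝 A) := by
    have hcont : Continuous fun ε : ℝ => A + ε • (1 : Matrix (Fin n) (Fin n) ℝ) := by fun_prop
    simpa using (hcont.tendsto 0).mono_left nhdsWithin_le_nhds
  exact hclosed.mem_of_tendsto hlim <| eventually_nhdsWithin_of_forall fun ε hε =>
    koteljanskii_of_posDef (PosDef.posSemidef_add hA (PosDef.one.smul hε)) S T
end

section
/- Let U be a 4×4 real orthogonal matrix with columns v, w, z, y. For 1 ≤ j < i ≤ 4 define γ_{ij} = det[[v_i, w_i],[v_j, w_j]]² + det[[v_i, z_i],[v_j, z_j]]². Then Σ_{1≤j<i≤4} γ_{ij} = 2, each γ_{ij} ≥ 0, and for any {i,j,k,l} = {1,2,3,4} one has γ_{ij} + γ_{kl} ≤ 1. -/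
open Matrix

private lemma row_entries (W : Matrix (Fin 4) (Fin 4) ℝ) (hW : W * Wᵀ = 1) (a b : Fin 4) :
    W a 0 * W b 0 + W a 1 * W b 1 + W a 2 * W b 2 + W a 3 * W b 3 = if a = b then 1 else 0 := by
  have := congrFun (congrFun hW a) b
  simpa [Matrix.mul_apply, Fin.sum_univ_four, Matrix.one_apply] using this

private lemma col_entries (W : Matrix (Fin 4) (Fin 4) ℝ) (hW : W * Wᵀ = 1) (a b : Fin 4) :
    W 0 a * W 0 b + W 1 a * W 1 b + W 2 a * W 2 b + W 3 a * W 3 b = if a = b then 1 else 0 := by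
  have hW' : Wᵀ * W = 1 := mul_eq_one_comm.mp hW
  have := congrFun (congrFun hW' a) b
  simpa [Matrix.mul_apply, Matrix.transpose_apply, Fin.sum_univ_four, Matrix.one_apply] using this

/-- Jacobi-type identity: for an orthogonal `4×4` matrix, the `2×2` minor on rows `0,1`,
columns `0,1` and the complementary minor on rows `2,3`, columns `2,3` have equal squares. -/
private lemma jac (W : Matrix (Fin 4) (Fin 4) ℝ) (hW : W * Wᵀ = 1) :
    (W 0 0 * W 1 1 - W 1 0 * W 0 1) ^ 2 = (W 2 2 * W 3 3 - W 3 2 * W 2 3) ^ 2 := by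
  have g := row_entries W hW
  have h := col_entries W hW
  have g02 : W 0 0 * W 2 0 + W 0 1 * W 2 1 + W 0 2 * W 2 2 + W 0 3 * W 2 3 = 0 := by
    have := g 0 2; rwa [if_neg (by decide)] at this
  have g03 : W 0 0 * W 3 0 + W 0 1 * W 3 1 + W 0 2 * W 3 2 + W 0 3 * W 3 3 = 0 := by
    have := g 0 3; rwa [if_neg (by decide)] at this
  have g12 : W 1 0 * W 2 0 + W 1 1 * W 2 1 + W 1 2 * W 2 2 + W 1 3 * W 2 3 = 0 := by
    have := g 1 2; rwa [if_neg (by decide)] at this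
  have g13 : W 1 0 * W 3 0 + W 1 1 * W 3 1 + W 1 2 * W 3 2 + W 1 3 * W 3 3 = 0 := by
    have := g 1 3; rwa [if_neg (by decide)] at this
  have g22 : W 2 0 * W 2 0 + W 2 1 * W 2 1 + W 2 2 * W 2 2 + W 2 3 * W 2 3 = 1 := by
    have := g 2 2; rwa [if_pos rfl] at this
  have g33 : W 3 0 * W 3 0 + W 3 1 * W 3 1 + W 3 2 * W 3 2 + W 3 3 * W 3 3 = 1 := by
    have := g 3 3; rwa [if_pos rfl] at this
  have h00 : W 0 0 * W 0 0 + W 1 0 * W 1 0 + W 2 0 * W 2 0 + W 3 0 * W 3 0 = 1 := by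
    have := h 0 0; rwa [if_pos rfl] at this
  have h11 : W 0 1 * W 0 1 + W 1 1 * W 1 1 + W 2 1 * W 2 1 + W 3 1 * W 3 1 = 1 := by
    have := h 1 1; rwa [if_pos rfl] at this
  have h22 : W 0 2 * W 0 2 + W 1 2 * W 1 2 + W 2 2 * W 2 2 + W 3 2 * W 3 2 = 1 := by
    have := h 2 2; rwa [if_pos rfl] at this
  have h33 : W 0 3 * W 0 3 + W 1 3 * W 1 3 + W 2 3 * W 2 3 + W 3 3 * W 3 3 = 1 := by
    have := h 3 3; rwa [if_pos rfl] at this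
  have h01 : W 0 0 * W 0 1 + W 1 0 * W 1 1 + W 2 0 * W 2 1 + W 3 0 * W 3 1 = 0 := by
    have := h 0 1; rwa [if_neg (by decide)] at this
  have h23 : W 0 2 * W 0 3 + W 1 2 * W 1 3 + W 2 2 * W 2 3 + W 3 2 * W 3 3 = 0 := by
    have := h 2 3; rwa [if_neg (by decide)] at this
  linear_combination
    (1/2 : ℝ) * ((W 0 0 ^ 2 + W 1 0 ^ 2) + (W 0 1 ^ 2 + W 1 1 ^ 2)
        + (W 2 2 ^ 2 + W 3 2 ^ 2) + (W 2 3 ^ 2 + W 3 3 ^ 2) - 1) * (h00 + h11 - g22 - g33)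
      + (1/2 : ℝ) *
        ((W 0 0 * W 2 0 + W 0 1 * W 2 1 - (W 0 2 * W 2 2 + W 0 3 * W 2 3)) * g02
          + (W 0 0 * W 3 0 + W 0 1 * W 3 1 - (W 0 2 * W 3 2 + W 0 3 * W 3 3)) * g03
          + (W 1 0 * W 2 0 + W 1 1 * W 2 1 - (W 1 2 * W 2 2 + W 1 3 * W 2 3)) * g12
          + (W 1 0 * W 3 0 + W 1 1 * W 3 1 - (W 1 2 * W 3 2 + W 1 3 * W 3 3)) * g13
          - (W 0 0 ^ 2 + W 1 0 ^ 2) * h00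
          - 2 * (W 0 0 * W 0 1 + W 1 0 * W 1 1) * h01
          - (W 0 1 ^ 2 + W 1 1 ^ 2) * h11
          + (W 2 2 ^ 2 + W 3 2 ^ 2) * h22
          + 2 * (W 2 2 * W 2 3 + W 3 2 * W 3 3) * h23
          + (W 2 3 ^ 2 + W 3 3 ^ 2) * h33)

private lemma key2 (W : Matrix (Fin 4) (Fin 4) ℝ) (hW : W * Wᵀ = 1) :
    (W 0 0 * W 1 1 - W 1 0 * W 0 1) ^ 2 + (W 0 0 * W 1 2 - W 1 0 * W 0 2) ^ 2 +
      ((W 2 0 * W 3 1 - W 3 0 * W 2 1) ^ 2 + (W 2 0 * W 3 2 - W 3 0 * W 2 2) ^ 2) ≤ 1 := by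
  have g := row_entries W hW
  have g22 : W 2 0 * W 2 0 + W 2 1 * W 2 1 + W 2 2 * W 2 2 + W 2 3 * W 2 3 = 1 := by
    have := g 2 2; rwa [if_pos rfl] at this
  have g33 : W 3 0 * W 3 0 + W 3 1 * W 3 1 + W 3 2 * W 3 2 + W 3 3 * W 3 3 = 1 := by
    have := g 3 3; rwa [if_pos rfl] at this
  have g23 : W 2 0 * W 3 0 + W 2 1 * W 3 1 + W 2 2 * W 3 2 + W 2 3 * W 3 3 = 0 := by
    have := g 2 3; rwa [if_neg (by decide)] at this
  have hcb : (W 2 0 * W 3 1 - W 3 0 * W 2 1) ^ 2 + (W 2 0 * W 3 2 - W 3 0 * W 2 2) ^ 2 +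
      (W 2 0 * W 3 3 - W 3 0 * W 2 3) ^ 2 + (W 2 1 * W 3 2 - W 3 1 * W 2 2) ^ 2 +
      (W 2 1 * W 3 3 - W 3 1 * W 2 3) ^ 2 + (W 2 2 * W 3 3 - W 3 2 * W 2 3) ^ 2 = 1 := by
    linear_combination
      (W 3 0 ^ 2 + W 3 1 ^ 2 + W 3 2 ^ 2 + W 3 3 ^ 2) * g22 + g33
        - (W 2 0 * W 3 0 + W 2 1 * W 3 1 + W 2 2 * W 3 2 + W 2 3 * W 3 3) * g23
  have j1 := jac W hW
  have h' : (W.submatrix id ![0, 2, 1, 3]) * (W.submatrix id ![0, 2, 1, 3])ᵀ = 1 := by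
    rw [Matrix.transpose_submatrix,
      ← Matrix.submatrix_mul W Wᵀ id ![0, 2, 1, 3] id (by decide), hW,
      Matrix.submatrix_id_id]
  have j2 := jac (W.submatrix id ![0, 2, 1, 3]) h'
  simp only [Matrix.submatrix_apply, id_eq,
    show (![0, 2, 1, 3] : Fin 4 → Fin 4) 0 = 0 from rfl,
    show (![0, 2, 1, 3] : Fin 4 → Fin 4) 1 = 2 from rfl,
    show (![0, 2, 1, 3] : Fin 4 → Fin 4) 2 = 1 from rfl,
    show (![0, 2, 1, 3] : Fin 4 → Fin 4) 3 = 3 from rfl] at j2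
  nlinarith [j1, j2, hcb, sq_nonneg (W 2 0 * W 3 3 - W 3 0 * W 2 3),
    sq_nonneg (W 2 1 * W 3 2 - W 3 1 * W 2 2)]

/-- For a `4×4` orthogonal matrix `U` with columns `v, w, z, y`, set
`γ_{ij} = det[[v_i,w_i],[v_j,w_j]]² + det[[v_i,z_i],[v_j,z_j]]²`.  Then
`Σ_{j<i} γ_{ij} = 2`, each `γ_{ij} ≥ 0`, and `γ_{ij} + γ_{kl} ≤ 1` whenever
`{i,j,k,l} = {1,2,3,4}`. -/
theorem gamma_coefficients_bounds (U : Matrix (Fin 4) (Fin 4) ℝ)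
    (hU : U * Uᵀ = 1) :
    let γ : Fin 4 → Fin 4 → ℝ := fun i j =>
      (U i 0 * U j 1 - U j 0 * U i 1) ^ 2 + (U i 0 * U j 2 - U j 0 * U i 2) ^ 2
    (∑ i, ∑ j ∈ Finset.univ.filter (· < i), γ i j) = 2 ∧
      (∀ i j, 0 ≤ γ i j) ∧
      ∀ i j k l : Fin 4, ({i, j, k, l} : Finset (Fin 4)) = Finset.univ →
        γ i j + γ k l ≤ 1 := by
  intro γ
  have f := col_entries U hU
  refine ⟨?_, fun i j => by positivity, ?_⟩
  · have f00 : U 0 0 * U 0 0 + U 1 0 * U 1 0 + U 2 0 * U 2 0 + U 3 0 * U 3 0 = 1 := by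
      have := f 0 0; rwa [if_pos rfl] at this
    have f11 : U 0 1 * U 0 1 + U 1 1 * U 1 1 + U 2 1 * U 2 1 + U 3 1 * U 3 1 = 1 := by
      have := f 1 1; rwa [if_pos rfl] at this
    have f22 : U 0 2 * U 0 2 + U 1 2 * U 1 2 + U 2 2 * U 2 2 + U 3 2 * U 3 2 = 1 := by
      have := f 2 2; rwa [if_pos rfl] at this
    have f01 : U 0 0 * U 0 1 + U 1 0 * U 1 1 + U 2 0 * U 2 1 + U 3 0 * U 3 1 = 0 := by
      have := f 0 1; rwa [if_neg (by decide)] at this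
    have f02 : U 0 0 * U 0 2 + U 1 0 * U 1 2 + U 2 0 * U 2 2 + U 3 0 * U 3 2 = 0 := by
      have := f 0 2; rwa [if_neg (by decide)] at this
    rw [Fin.sum_univ_four,
      show (Finset.univ.filter (· < (0 : Fin 4))) = ∅ from by decide,
      show (Finset.univ.filter (· < (1 : Fin 4))) = {0} from by decide,
      show (Finset.univ.filter (· < (2 : Fin 4))) = {0, 1} from by decide,
      show (Finset.univ.filter (· < (3 : Fin 4))) = {0, 1, 2} from by decide,
      Finset.sum_empty, Finset.sum_singleton,
      Finset.sum_insert (by decide), Finset.sum_singleton,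
      Finset.sum_insert (by decide), Finset.sum_insert (by decide), Finset.sum_singleton]
    simp only [γ]
    linear_combination
      (U 0 1 ^ 2 + U 1 1 ^ 2 + U 2 1 ^ 2 + U 3 1 ^ 2
          + U 0 2 ^ 2 + U 1 2 ^ 2 + U 2 2 ^ 2 + U 3 2 ^ 2) * f00 + f11 + f22
        - (U 0 0 * U 0 1 + U 1 0 * U 1 1 + U 2 0 * U 2 1 + U 3 0 * U 3 1) * f01
        - (U 0 0 * U 0 2 + U 1 0 * U 1 2 + U 2 0 * U 2 2 + U 3 0 * U 3 2) * f02
  · intro i j k l h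
    have hsurj : Function.Surjective ![i, j, k, l] := by
      intro b
      have hb : b ∈ ({i, j, k, l} : Finset (Fin 4)) := h ▸ Finset.mem_univ b
      simp only [Finset.mem_insert, Finset.mem_singleton] at hb
      rcases hb with rfl | rfl | rfl | rfl
      · exact ⟨0, rfl⟩
      · exact ⟨1, rfl⟩
      · exact ⟨2, rfl⟩
      · exact ⟨3, rfl⟩
    have hinj : Function.Injective ![i, j, k, l] :=
      Finite.injective_iff_surjective.mpr hsurj
    have h' : (U.submatrix ![i, j, k, l] id) * (U.submatrix ![i, j, k, l] id)ᵀ = 1 := by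
      rw [Matrix.transpose_submatrix,
        ← Matrix.submatrix_mul U Uᵀ ![i, j, k, l] id ![i, j, k, l] Function.bijective_id, hU]
      exact Matrix.submatrix_one _ hinj
    have key := key2 (U.submatrix ![i, j, k, l] id) h'
    simp only [Matrix.submatrix_apply, id_eq, Matrix.cons_val_zero,
      show ![i, j, k, l] 1 = j from rfl,
      show ![i, j, k, l] 2 = k from rfl,
      show ![i, j, k, l] 3 = l from rfl] at key
    simp only [γ]
    linarith [key]
end

section
/- In the group algebra Q[S_n] of the symmetric group, the product Π_{j=2}^{n} Π_{i=1}^{j-1} (1 + (1/(j-i))·e_{(i j)}), taken in this order, equals Σ_{g ∈ S_n} e_g, the sum of all group elements. -/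
/-!
Let `T_k` be the sum of the permutations fixing every point `≥ k` (a copy of `S_k`), so that
`T_0 = 1` and `T_n = Σ_g e_g`; it suffices that the `j`-th inner product carries `T_j` to `T_{j+1}`.
Since `T_j e_h = T_j` for `h ∈ S_j` and `(i j)(k j)(i j) = (k i)`, right multiplication by
`e_{(k j)}` fixes `T_j e_{(i j)}` for `i < k < j`. Hence multiplying `T_j` successively by the
factors `1 + e_{(i j)}/(j - i)` keeps the form `T_j + (j - i)⁻¹ Σ_{i' ≤ i} T_j e_{(i' j)}`, the
coefficients telescoping through `(j - i + 1)⁻¹ (1 + (j - i)⁻¹) = (j - i)⁻¹`, and ends at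
`T_j (1 + Σ_{i<j} e_{(i j)})`. This is `T_{j+1}`, because the transpositions `(i j)`, `i ≤ j`,
are representatives of the right cosets of `S_j` in `S_{j+1}`.
-/

open MonoidAlgebra Equiv

namespace List

theorem mul_prod_ofFn_eq_of_telescoping {M : Type*} [Monoid M] (T : ℕ → M) :
    ∀ {n : ℕ} (f : Fin n → M), (∀ k : Fin n, T k * f k = T (k + 1)) →
      T 0 * (ofFn f).prod = T n
  | 0, _, _ => by simp
  | n + 1, f, hf => by
    rw [ofFn_succ', concat_eq_append, prod_append, ← mul_assoc,
      mul_prod_ofFn_eq_of_telescoping T _ fun k => hf k.castSucc, prod_singleton]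
    exact hf (Fin.last n)

theorem filter_lt_finRange {n : ℕ} (j : Fin n) :
    (finRange n).filter (· < j) = (finRange j).map (Fin.castLE j.isLt.le) := by
  refine ((pairwise_lt_finRange n).filter _).eq_of_mem_iff
    ((pairwise_lt_finRange j).map _ fun _ _ => id) fun i => ?_
  simp only [mem_filter, mem_finRange, mem_map, true_and, decide_eq_true_eq]
  exact ⟨fun h => ⟨⟨i, h⟩, rfl⟩, by rintro ⟨i, rfl⟩; exact i.isLt⟩

end List

theorem mul_prod_ofFn_one_add_inv_smul {K A : Type*} [Field K] [CharZero K] [Ring A]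
    [Algebra K A] (t : A) {m : ℕ} (w : Fin m → A)
    (hw : ∀ i k, i < k → t * w i * w k = t * w i) :
    t * (List.ofFn fun i : Fin m => 1 + ((m : K) - i)⁻¹ • w i).prod = t + ∑ i, t * w i := by
  let S : ℕ → A := fun k => ∑ i ∈ Finset.univ.filter (fun i : Fin m => (i : ℕ) < k), t * w i
  let T : ℕ → A := fun k => t + ((m : K) - k + 1)⁻¹ • S k
  have hstep (k : Fin m) : T k * (1 + ((m : K) - k)⁻¹ • w k) = T (k + 1) := by
    have hS : S k * w k = S k := by
      rw [Finset.sum_mul]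
      exact Finset.sum_congr rfl fun i hi => hw i k (Finset.mem_filter.1 hi).2
    have hS_succ : S (k + 1) = t * w k + S k := by
      have hsplit : (Finset.univ.filter fun i : Fin m => (i : ℕ) < k + 1) =
          insert k (Finset.univ.filter fun i : Fin m => (i : ℕ) < k) := by
        ext i
        simp [Fin.ext_iff]
        omega
      simp only [S]
      rw [hsplit, Finset.sum_insert (by simp)]
    have hk : (m : K) - k ≠ 0 := sub_ne_zero.2 (by exact_mod_cast k.isLt.ne')
    have hk1 : (m : K) - k + 1 ≠ 0 := by
      rw [sub_add_eq_add_sub, sub_ne_zero]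
      exact_mod_cast (by omega : m + 1 ≠ k)
    have hcoef : ((m : K) - k + 1)⁻¹ * (1 + ((m : K) - k)⁻¹) = ((m : K) - k)⁻¹ := by
      field_simp
    have hcast : (m : K) - ((k + 1 : ℕ) : K) + 1 = m - k := by push_cast; ring
    simp only [T]
    rw [hS_succ, hcast]
    generalize S k = s at hS ⊢
    rw [add_mul, mul_add, mul_add, mul_one, mul_one, smul_mul_smul_comm, hS, mul_smul_comm]
    linear_combination (norm := module) hcoef • s
  simpa [T, S] using List.mul_prod_ofFn_eq_of_telescoping T _ hstep

namespace MonoidAlgebra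

section SubgroupSum

variable (k : Type*) {G : Type*} [Semiring k] [Group G]

noncomputable def subgroupSum (H : Subgroup G) [Fintype H] : MonoidAlgebra k G :=
  ∑ g : H, of k G g

variable {k}

theorem subgroupSum_mul_of_mem {H : Subgroup G} [Fintype H] {h : G} (hh : h ∈ H) :
    subgroupSum k H * of k G h = subgroupSum k H := by
  rw [subgroupSum, Finset.sum_mul]
  simp_rw [← map_mul]
  exact Fintype.sum_equiv (Equiv.mulRight ⟨h, hh⟩) _ _ fun _ => rfl

theorem subgroupSum_mul_of_mul_of {H : Subgroup G} [Fintype H] {g g' : G}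
    (h : g * g' * g⁻¹ ∈ H) :
    subgroupSum k H * of k G g * of k G g' = subgroupSum k H * of k G g :=
  calc subgroupSum k H * of k G g * of k G g'
      = subgroupSum k H * of k G (g * g' * g⁻¹) * of k G g := by
        simp only [mul_assoc, ← map_mul, inv_mul_cancel, mul_one]
    _ = subgroupSum k H * of k G g := by rw [subgroupSum_mul_of_mem h]

theorem subgroupSum_mul_sum_of_bijective {H K : Subgroup G} [Fintype H] [Fintype K]
    {ι : Type*} [Fintype ι] (r : ι → G) (f : H × ι → K) (hf : Function.Bijective f)
    (hfr : ∀ p, (f p : G) = p.1 * r p.2) :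
    subgroupSum k H * ∑ i, of k G (r i) = subgroupSum k K := by
  rw [subgroupSum, subgroupSum, Fintype.sum_mul_sum, ← Fintype.sum_prod_type']
  exact Fintype.sum_bijective f hf _ _ fun p => by rw [hfr, map_mul]

theorem subgroupSum_of_eq_bot {H : Subgroup G} [Fintype H] (h : H = ⊥) :
    subgroupSum k H = 1 := by
  subst h
  rw [subgroupSum, Fintype.sum_subsingleton _ 1]
  exact map_one _

theorem subgroupSum_of_eq_top [Fintype G] {H : Subgroup G} [Fintype H] (h : H = ⊤) :
    subgroupSum k H = ∑ g : G, of k G g := by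
  subst h
  exact Fintype.sum_equiv Subgroup.topEquiv.toEquiv _ _ fun _ => rfl

end SubgroupSum

end MonoidAlgebra

def permsBelow (n k : ℕ) : Subgroup (Perm (Fin n)) :=
  fixingSubgroup (Perm (Fin n)) {x : Fin n | k ≤ (x : ℕ)}

section PermsBelow

variable {n k : ℕ}

theorem mem_permsBelow {g : Perm (Fin n)} :
    g ∈ permsBelow n k ↔ ∀ x : Fin n, k ≤ x → g x = x := by
  simp [permsBelow, mem_fixingSubgroup_iff, Perm.smul_def]

instance : DecidablePred (· ∈ permsBelow n k) := fun _ => decidable_of_iff _ mem_permsBelow.symm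

theorem apply_eq_of_mem_permsBelow {g : Perm (Fin n)} (hg : g ∈ permsBelow n k) {x : Fin n}
    (hx : k ≤ x) : g x = x :=
  mem_permsBelow.1 hg x hx

theorem permsBelow_zero : permsBelow n 0 = ⊥ :=
  eq_bot_iff.2 fun _ hg => Perm.ext fun x => apply_eq_of_mem_permsBelow hg x.val.zero_le

theorem permsBelow_self : permsBelow n n = ⊤ :=
  eq_top_iff.2 fun _ _ => mem_permsBelow.2 fun x hx => absurd x.isLt (not_lt.2 hx)

theorem swap_mem_permsBelow {i j : Fin n} (hi : i < k) (hj : j < k) :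
    swap i j ∈ permsBelow n k :=
  mem_permsBelow.2 fun _ hx => swap_apply_of_ne_of_ne (by omega) (by omega)

theorem mul_swap_mem_permsBelow_succ (j : Fin n) {g : Perm (Fin n)} (hg : g ∈ permsBelow n j)
    {i : Fin n} (hi : i ≤ j) : g * swap i j ∈ permsBelow n (j + 1) := by
  refine mem_permsBelow.2 fun x hx => ?_
  rw [Perm.mul_apply, swap_apply_of_ne_of_ne (by omega) (by omega)]
  exact apply_eq_of_mem_permsBelow hg (by omega)

theorem mul_swap_apply_of_mem_permsBelow {j : Fin n} {g : Perm (Fin n)}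
    (hg : g ∈ permsBelow n j) (i : Fin n) : (g * swap i j) i = j := by
  rw [Perm.mul_apply, swap_apply_left, apply_eq_of_mem_permsBelow hg le_rfl]

theorem permsBelow_mul_swap_bijective (j : Fin n) :
    Function.Bijective fun p : permsBelow n j × Fin (j + 1) =>
      (⟨p.1 * swap (Fin.castLE j.isLt p.2) j,
        mul_swap_mem_permsBelow_succ j p.1.2 (Nat.le_of_lt_succ p.2.isLt)⟩ :
        permsBelow n (j + 1)) := by
  constructor
  · rintro ⟨⟨g, hg⟩, i⟩ ⟨⟨g', hg'⟩, i'⟩ h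
    have heq : g * swap (Fin.castLE j.isLt i) j = g' * swap (Fin.castLE j.isLt i') j :=
      congrArg Subtype.val h
    obtain rfl : i = i' := by
      apply Fin.castLE_injective j.isLt
      apply (g' * swap (Fin.castLE j.isLt i') j).injective
      rw [mul_swap_apply_of_mem_permsBelow hg', ← heq, mul_swap_apply_of_mem_permsBelow hg]
    simpa using heq
  · rintro ⟨g, hg⟩
    set i := g⁻¹ j
    have hgi : g i = j := by simp [i]
    have hij : i ≤ j := by
      by_contra! hji
      rw [apply_eq_of_mem_permsBelow hg hji] at hgi
      exact hji.ne' hgi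
    refine ⟨(⟨g * swap i j, mem_permsBelow.2 fun x hx => ?_⟩, ⟨i, Nat.lt_succ_of_le hij⟩), ?_⟩
    · rcases hx.eq_or_lt with hxj | hxj
      · rw [← Fin.ext hxj, Perm.mul_apply, swap_apply_right, hgi]
      · rw [Perm.mul_apply, swap_apply_of_ne_of_ne (by omega) (by omega)]
        exact apply_eq_of_mem_permsBelow hg hxj
    · ext1
      simp [Fin.castLE, i, mul_assoc]

theorem subgroupSum_permsBelow_mul_prod {K : Type*} [Field K] [CharZero K] (j : Fin n) :
    subgroupSum K (permsBelow n j) * (((List.finRange n).filter fun i => i < j).map fun i =>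
        (1 + ((j.val : K) - (i.val : K))⁻¹ • of K (Perm (Fin n)) (swap i j))).prod
      = subgroupSum K (permsBelow n (j + 1)) := by
  rw [List.filter_lt_finRange, List.map_map, ← List.ofFn_eq_map]
  simp only [Function.comp_def, Fin.val_castLE]
  rw [mul_prod_ofFn_one_add_inv_smul _ fun i : Fin j => of K _ (swap (Fin.castLE j.isLt.le i) j)]
  · rw [← subgroupSum_mul_sum_of_bijective (fun i => swap (Fin.castLE j.isLt i) j) _
      (permsBelow_mul_swap_bijective j) fun _ => rfl, Fin.sum_univ_castSucc,
      swap_eq_one_iff.2 (Fin.ext rfl : Fin.castLE j.isLt (Fin.last j) = j),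
      map_one, mul_add, mul_one, Finset.mul_sum, add_comm]
    rfl
  · intro i k hik
    apply subgroupSum_mul_of_mul_of
    rw [← swap_apply_apply, swap_apply_right,
      swap_apply_of_ne_of_ne ((Fin.castLE_injective _).ne hik.ne') (Fin.ne_of_lt k.isLt)]
    exact swap_mem_permsBelow k.isLt i.isLt

end PermsBelow

/-- In the group algebra `ℚ[S_n]`, the ordered product
`Π_{j=2}^{n} Π_{i=1}^{j-1} (1 + (1/(j-i))·e_{(i j)})` (outer index `j`
ascending, inner index `i` ascending) equals `Σ_{g ∈ S_n} e_g`. -/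
theorem product_of_transposition_factors (n : ℕ) :
    (((List.finRange n).flatMap fun j =>
        ((List.finRange n).filter fun i => i < j).map fun i =>
          (1 + ((j.val : ℚ) - (i.val : ℚ))⁻¹ •
            (MonoidAlgebra.of ℚ (Equiv.Perm (Fin n)) (Equiv.swap i j)) :
            MonoidAlgebra ℚ (Equiv.Perm (Fin n))))).prod
      = ∑ g : Equiv.Perm (Fin n), MonoidAlgebra.of ℚ (Equiv.Perm (Fin n)) g := by
  rw [List.flatMap_def, List.prod_flatten, List.map_map, Function.comp_def, ← List.ofFn_eq_map]
  have h := List.mul_prod_ofFn_eq_of_telescoping (fun k => subgroupSum ℚ (permsBelow n k)) _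
    subgroupSum_permsBelow_mul_prod
  rwa [subgroupSum_of_eq_bot permsBelow_zero, one_mul, subgroupSum_of_eq_top permsBelow_self] at h
end
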